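/- arXiv:1810.06145 — 2 statements merged into one kernel-verified Lean document; each statement's English description precedes it below -/
import Mathlib

section
/- Every almost ι-complex is locally equivalent to a reduced almost ι-complex, i.e., one whose differential ∂ is congruent to 0 mod U (im ∂ ⊆ im U). -/
open Polynomial

abbrev F2 : Type := ZMod 2
abbrev R : Type := Polynomial F2

noncomputable section

namespace AI

/-- The variable `U`. -/
def Uu : R := Polynomial.X

/-- The free `R`-module of rank `n`. -/
abbrev V (n : ℕ) : Type := Fin n → R

/-- The `i`-th standard basis vector. -/
def e {n : ℕ} (i : Fin n) : V n := fun j => if j = i then 1 else 0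

/-- The `i`-th standard basis vector over `F2`. -/
def e2 {n : ℕ} (i : Fin n) : Fin n → F2 := fun j => if j = i then 1 else 0

/-- `x` lies in the image of multiplication by `U`. -/
def modU {n : ℕ} (x : V n) : Prop := ∀ j, (x j).coeff 0 = 0

/-- `x` is homogeneous of degree `c` with respect to the generator gradings `gr`
(where `deg U = -2`). -/
def IsHomog {n : ℕ} (gr : Fin n → ℤ) (c : ℤ) (x : V n) : Prop :=
  ∀ (j : Fin n) (m : ℕ), (x j).coeff m ≠ 0 → gr j - 2 * (m : ℤ) = c

/-- `f` is a graded `R`-linear map of degree `dg`. -/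
def GradedMap {m n : ℕ} (gr₁ : Fin m → ℤ) (gr₂ : Fin n → ℤ) (dg : ℤ)
    (f : V m →ₗ[R] V n) : Prop :=
  ∀ i : Fin m, IsHomog gr₂ (gr₁ i + dg) (f (e i))

/-- The raw data of a free finitely generated `ℤ`-graded complex over `R = F[U]`. -/
structure PreCplx where
  n : ℕ
  gr : Fin n → ℤ
  d : V n →ₗ[R] V n

def IsCycle (C : PreCplx) (x : V C.n) : Prop := C.d x = 0

def IsBdry (C : PreCplx) (x : V C.n) : Prop := ∃ y, C.d y = x

/-- `x` is a cycle representing a `U`-nontorsion homology class. -/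
def NontorsionClass (C : PreCplx) (x : V C.n) : Prop :=
  IsCycle C x ∧ ∀ k : ℕ, ¬ IsBdry C ((Uu ^ k) • x)

/-- `U⁻¹H_*(C) ≅ F[U, U⁻¹]`, generated by a degree-zero cycle (normalization
convention: the maximal degree of a `U`-nontorsion cycle class is zero, so the
localized homology is supported in even degrees). -/
def HtowerCond (C : PreCplx) : Prop :=
  ∃ x : V C.n, IsCycle C x ∧ IsHomog C.gr 0 x ∧
    (∀ k : ℕ, ¬ IsBdry C ((Uu ^ k) • x)) ∧
    (∀ y : V C.n, IsCycle C y →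
      ∃ (k : ℕ) (p : R) (z : V C.n), (Uu ^ k) • y = p • x + C.d z)

/-- `C` is a genuine graded chain complex. -/
def IsCplx (C : PreCplx) : Prop :=
  GradedMap C.gr C.gr (-1) C.d ∧ C.d ∘ₗ C.d = 0

/-- `f` and `g` are homotopic mod `U`. -/
def HomotopicModU (C₁ C₂ : PreCplx) (f g : V C₁.n →ₗ[R] V C₂.n) : Prop :=
  ∃ H : V C₁.n →ₗ[R] V C₂.n, GradedMap C₁.gr C₂.gr 1 H ∧
    ∀ x, modU ((f + g + H ∘ₗ C₁.d + C₂.d ∘ₗ H) x)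

/-- The raw data of an almost ι-complex. -/
structure PreAI extends PreCplx where
  ι : V n →ₗ[R] V n

/-- `ω = 1 + ι`. -/
def omega (C : PreAI) : V C.n →ₗ[R] V C.n := LinearMap.id + C.ι

/-- `C` is an almost ι-complex. -/
def IsAICplx (C : PreAI) : Prop :=
  IsCplx C.toPreCplx ∧
  GradedMap C.gr C.gr 0 C.ι ∧
  (∀ x, modU ((C.ι ∘ₗ C.d + C.d ∘ₗ C.ι) x)) ∧
  HomotopicModU C.toPreCplx C.toPreCplx (C.ι ∘ₗ C.ι) LinearMap.id ∧
  HtowerCond C.toPreCplx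

/-- `C` is a genuine ι-complex: `ι` is an honest chain map whose square is
genuinely chain homotopic to the identity. -/
def IsIotaCplx (C : PreAI) : Prop :=
  IsCplx C.toPreCplx ∧
  GradedMap C.gr C.gr 0 C.ι ∧
  C.ι ∘ₗ C.d = C.d ∘ₗ C.ι ∧
  (∃ H : V C.n →ₗ[R] V C.n, GradedMap C.gr C.gr 1 H ∧
    C.ι ∘ₗ C.ι + LinearMap.id = H ∘ₗ C.d + C.d ∘ₗ H) ∧
  HtowerCond C.toPreCplx

/-- A reduced complex: the differential vanishes mod `U`. -/
def Reduced (C : PreAI) : Prop := ∀ x, modU (C.d x)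

/-- `f` is an almost ι-morphism. -/
def isAIMorphism (C₁ C₂ : PreAI) (f : V C₁.n →ₗ[R] V C₂.n) : Prop :=
  GradedMap C₁.gr C₂.gr 0 f ∧
  f ∘ₗ C₁.d = C₂.d ∘ₗ f ∧
  HomotopicModU C₁.toPreCplx C₂.toPreCplx (f ∘ₗ C₁.ι) (C₂.ι ∘ₗ f)

/-- A local map: an almost ι-morphism inducing an isomorphism on `U`-localized
homology (equivalently, with the normalization conventions in force, preserving
`U`-nontorsion cycle classes). -/
def isLocalMap (C₁ C₂ : PreAI) (f : V C₁.n →ₗ[R] V C₂.n) : Prop :=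
  isAIMorphism C₁ C₂ f ∧
  ∀ x, NontorsionClass C₁.toPreCplx x → NontorsionClass C₂.toPreCplx (f x)

/-- Local equivalence of almost ι-complexes. -/
def LocallyEquiv (C₁ C₂ : PreAI) : Prop :=
  (∃ f, isLocalMap C₁ C₂ f) ∧ (∃ g, isLocalMap C₂ C₁ g)

/-- The tensor product (over `R`) of linear maps between free modules,
in the bases indexed by `finProdFinEquiv`. -/
def tmap {m n m' n' : ℕ} (f : V m →ₗ[R] V m') (g : V n →ₗ[R] V n') :
    V (m * n) →ₗ[R] V (m' * n') where
  toFun x := fun p => ∑ q : Fin (m * n),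
    x q * f (e (finProdFinEquiv.symm q).1) (finProdFinEquiv.symm p).1
        * g (e (finProdFinEquiv.symm q).2) (finProdFinEquiv.symm p).2
  map_add' x y := by
    funext p
    simp [Pi.add_apply, add_mul, Finset.sum_add_distrib]
  map_smul' c x := by
    funext p
    simp only [RingHom.id_apply, Pi.smul_apply, smul_eq_mul, Finset.mul_sum]
    exact Finset.sum_congr rfl fun q _ => by ring

/-- The tensor product of complexes. -/
def tensorPre (C₁ C₂ : PreCplx) : PreCplx where
  n := C₁.n * C₂.n
  gr := fun q => C₁.gr (finProdFinEquiv.symm q).1 + C₂.gr (finProdFinEquiv.symm q).2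
  d := tmap C₁.d LinearMap.id + tmap LinearMap.id C₂.d

/-- The tensor product of almost ι-complexes. -/
def tensorAI (C₁ C₂ : PreAI) : PreAI where
  toPreCplx := tensorPre C₁.toPreCplx C₂.toPreCplx
  ι := tmap C₁.ι C₂.ι

/-- The transpose of a square matrix map (the dual map in the dual basis). -/
def tr {n : ℕ} (f : V n →ₗ[R] V n) : V n →ₗ[R] V n where
  toFun x := fun j => ∑ i : Fin n, x i * f (e j) i
  map_add' x y := by
    funext j
    simp [Pi.add_apply, add_mul, Finset.sum_add_distrib]
  map_smul' c x := by
    funext j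
    simp only [RingHom.id_apply, Pi.smul_apply, smul_eq_mul, Finset.mul_sum]
    exact Finset.sum_congr rfl fun i _ => by ring

/-- The dual complex. -/
def dualPre (C : PreCplx) : PreCplx where
  n := C.n
  gr := fun i => -C.gr i
  d := tr C.d

/-- The dual almost ι-complex. -/
def dualAI (C : PreAI) : PreAI where
  toPreCplx := dualPre C.toPreCplx
  ι := tr C.ι

/-- The trivial complex `C(0) = (F[U], ∂ = 0, ι = id)`. -/
def cZero : PreAI := ⟨⟨1, fun _ => 0, 0⟩, LinearMap.id⟩

/-- The contraction map `C ⊗ C^∨ → F[U]`, `x ⊗ y ↦ y(x)`. -/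
def contr (n : ℕ) : V (n * n) →ₗ[R] V 1 where
  toFun x := fun _ => ∑ i : Fin n, x (finProdFinEquiv (i, i))
  map_add' x y := by funext j; simp [Pi.add_apply, Finset.sum_add_distrib]
  map_smul' c x := by
    funext j
    simp only [RingHom.id_apply, Pi.smul_apply, smul_eq_mul, Finset.mul_sum]

/-! ### Standard and augmented complexes -/

/-- The `i`-th symbol (0-indexed) of the parameter sequence, padded by zeros. -/
def seqAt (M : List ℤ) (i : ℕ) : ℤ := M.getD i 0

/-- Grading step of a `b`-arrow. -/
def bstep (b : ℤ) : ℤ := (if 0 < b then 1 else -1) - 2 * b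

/-- Grading of the generator `T_i` of the standard/augmented complex. -/
def stdGr (M : List ℤ) (i : ℕ) : ℤ :=
  ∑ s ∈ Finset.range i, if s % 2 = 1 then bstep (seqAt M s) else 0

/-- A linear endomorphism of `V n` given by a matrix of coefficients. -/
def ofMatrix {n : ℕ} (c : ℕ → ℕ → R) : V n →ₗ[R] V n where
  toFun x := fun j => ∑ i : Fin n, x i * c i j
  map_add' x y := by
    funext j
    simp [Pi.add_apply, add_mul, Finset.sum_add_distrib]
  map_smul' r x := by
    funext j
    simp only [RingHom.id_apply, Pi.smul_apply, smul_eq_mul, Finset.mul_sum]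
    exact Finset.sum_congr rfl fun i _ => by ring

/-- Matrix of the differential of the standard/augmented complex: the `b`-symbol
at (0-indexed) odd position `s` of `M` relates `T_s` and `T_{s+1}`. -/
def dCoef (M : List ℤ) (i j : ℕ) : R :=
  if i % 2 = 1 ∧ seqAt M i < 0 ∧ j = i + 1 then Uu ^ (seqAt M i).natAbs
  else if i % 2 = 0 ∧ 0 < i ∧ 0 < seqAt M (i - 1) ∧ j + 1 = i then
    Uu ^ (seqAt M (i - 1)).natAbs
  else 0

/-- Matrix of `ω = 1 + ι` on the standard/augmented complex: the `a`-symbol at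
(0-indexed) even position `s` of `M` relates `T_s` and `T_{s+1}`. -/
def wCoef (M : List ℤ) (i j : ℕ) : R :=
  if i % 2 = 0 ∧ seqAt M i = -1 ∧ j = i + 1 then 1
  else if i % 2 = 1 ∧ seqAt M (i - 1) = 1 ∧ j + 1 = i then 1
  else 0

/-- Matrix of `ι = 1 + ω` (char 2). -/
def iCoef (M : List ℤ) (i j : ℕ) : R :=
  (if i = j then 1 else 0) + wCoef M i j

/-- The standard (even length) or augmented (odd length) complex on generators
`T_0, …, T_{M.length}` determined by the symbol sequence `M`. -/
def symCplx (M : List ℤ) : PreAI :=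
  ⟨⟨M.length + 1, fun i => stdGr M i, ofMatrix (dCoef M)⟩, ofMatrix (iCoef M)⟩

/-- Validity of a standard parameter sequence. -/
def StdParams (M : List ℤ) : Prop :=
  M.length % 2 = 0 ∧
  ∀ i < M.length, if i % 2 = 0 then seqAt M i = 1 ∨ seqAt M i = -1 else seqAt M i ≠ 0

/-- Validity of an augmented parameter sequence. -/
def AugParams (M : List ℤ) : Prop :=
  M.length % 2 = 1 ∧
  ∀ i < M.length, if i % 2 = 0 then seqAt M i = 1 ∨ seqAt M i = -1 else seqAt M i ≠ 0

/-- The modified order `<!` on `ℤ`: `−1 <! −2 <! ⋯ <! 0 <! ⋯ <! 2 <! 1`. -/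
def ltB (x y : ℤ) : Prop :=
  (x < 0 ∧ 0 ≤ y) ∨ (x ≤ 0 ∧ 0 < y) ∨ (x < 0 ∧ y < 0 ∧ y < x) ∨ (0 < x ∧ 0 < y ∧ y < x)

def leB (x y : ℤ) : Prop := ltB x y ∨ x = y

/-- Strict lexicographic order on (zero-padded) parameter sequences. -/
def lexLt (M M' : List ℤ) : Prop :=
  ∃ k : ℕ, (∀ i < k, seqAt M i = seqAt M' i) ∧ ltB (seqAt M k) (seqAt M' k)

def lexLe (M M' : List ℤ) : Prop := lexLt M M' ∨ ∀ i, seqAt M i = seqAt M' i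

/-- A short map from the standard (even `M.length`) or augmented (odd `M.length`)
complex determined by `M` to `A`: the `ω`-condition (standard case) resp. the
`∂`-condition (augmented case) is waived on the final generator. -/
def isShortMap (M : List ℤ) (A : PreAI) (f : V (M.length + 1) →ₗ[R] V A.n) : Prop :=
  GradedMap (symCplx M).gr A.gr 0 f ∧
  (∀ i : Fin (M.length + 1), ((i : ℕ) < M.length ∨ M.length % 2 = 0) →
    A.d (f (e i)) = f ((symCplx M).d (e i))) ∧
  (∀ i : Fin (M.length + 1), ((i : ℕ) < M.length ∨ M.length % 2 = 1) →
    modU ((omega A) (f (e i)) + f ((omega (symCplx M)) (e i))))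

/-- A local short map: `T_0` goes to a `U`-nontorsion cycle class. -/
def isLocalShortMap (M : List ℤ) (A : PreAI) (f : V (M.length + 1) →ₗ[R] V A.n) : Prop :=
  isShortMap M A f ∧ NontorsionClass A.toPreCplx (f (e ⟨0, Nat.succ_pos _⟩))

/-- The sequence of invariants `s_i(A)` (1-indexed in the paper; 0-indexed here):
`s k` is the `≤!`-maximum of the `(k+1)`-st symbols among standard complexes
locally mapping to `A` whose first `k` symbols are `s 0, …, s (k-1)`. -/
def IsInvariantSeq (A : PreAI) (s : ℕ → ℤ) : Prop :=
  ∀ k : ℕ,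
    (∃ M : List ℤ, StdParams M ∧ (∃ f, isLocalMap (symCplx M) A f) ∧
      ∀ i ≤ k, seqAt M i = s i) ∧
    (∀ M : List ℤ, StdParams M → (∃ f, isLocalMap (symCplx M) A f) →
      (∀ i < k, seqAt M i = s i) → leB (seqAt M k) (s k))

/-- Reduction mod `U` of a linear map, as an `F₂`-linear map. -/
def mapHat {m n : ℕ} (f : V m →ₗ[R] V n) : (Fin m → F2) →ₗ[F2] (Fin n → F2) where
  toFun x := fun j => ∑ i : Fin m, x i * (f (e i) j).coeff 0
  map_add' x y := by
    funext j
    simp [Pi.add_apply, add_mul, Finset.sum_add_distrib]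
  map_smul' c x := by
    funext j
    simp only [RingHom.id_apply, Pi.smul_apply, smul_eq_mul, Finset.mul_sum]
    exact Finset.sum_congr rfl fun i _ => by ring

/-- The induced action `ω̂` on `C/U`. -/
def wHat (C : PreAI) : (Fin C.n → F2) →ₗ[F2] (Fin C.n → F2) := mapHat (omega C)

end AI

namespace AI

/-!
If some entry of `∂` is a unit, `∂ e_i = e_j + ⋯` (the grading forces the entry to be exactly `1`),
then `e_i` and `∂ e_i` span an acyclic summand. Cancelling it leaves a complex on the other
generators which is a deformation retract `(f, g, H)` of `C`: with `H = e_i e_jᵛ`, `f` is `1 + ∂H`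
followed by restriction and `g` is extension by zero followed by `1 + H∂`. Transferring `ι` along it
gives an almost ι-complex, and `f`, `g` are local maps because every error term is a multiple of
`ι∂ + ∂ι ≡ 0 mod U`. The rank drops by two, so induction ends at a reduced complex.
-/

lemma V.two_eq_zero {n : ℕ} : (2 : V n) = 0 := funext fun _ => CharTwo.two_eq_zero

lemma V.add_self {n : ℕ} (x : V n) : x + x = 0 := funext fun j => CharTwo.add_self_eq_zero (x j)

lemma sum_smul_e {n : ℕ} (x : V n) : ∑ i, x i • e i = x := by
  funext j
  simp [e, Finset.sum_apply]

lemma map_eq_sum_smul {m n : ℕ} (p : V m →ₗ[R] V n) (x : V m) :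
    p x = ∑ i, x i • p (e i) := by
  conv_lhs => rw [← sum_smul_e x]
  simp only [map_sum, map_smul]

lemma e_apply_self {n : ℕ} (i : Fin n) : e i i = 1 := if_pos rfl

lemma e_apply_of_ne {n : ℕ} {i j : Fin n} (h : j ≠ i) : e i j = 0 := if_neg h

lemma modU_zero {n : ℕ} : modU (0 : V n) := fun _ => by simp

lemma modU.add {n : ℕ} {x y : V n} (hx : modU x) (hy : modU y) : modU (x + y) := fun j => by
  simp [Polynomial.coeff_add, hx j, hy j]

lemma modU.map {m n : ℕ} (p : V m →ₗ[R] V n) {x : V m} (hx : modU x) : modU (p x) := by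
  have hx' : x = Uu • fun j => (x j).divX := by
    funext j
    simpa [Uu, hx j] using (Polynomial.X_mul_divX_add (x j)).symm
  rw [hx', map_smul]
  intro j
  simp [Uu]

section Graded

variable {m n : ℕ}

lemma IsHomog.zero (gr : Fin n → ℤ) (c : ℤ) : IsHomog gr c (0 : V n) := by
  intro j m hm
  simp at hm

lemma IsHomog.add {gr : Fin n → ℤ} {c : ℤ} {x y : V n} (hx : IsHomog gr c x)
    (hy : IsHomog gr c y) : IsHomog gr c (x + y) := by
  intro j m hm
  rw [Pi.add_apply, Polynomial.coeff_add] at hm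
  by_cases hxj : (x j).coeff m = 0
  · exact hy j m (by simpa [hxj] using hm)
  · exact hx j m hxj

lemma isHomog_e (gr : Fin n → ℤ) (i : Fin n) : IsHomog gr (gr i) (e i) := by
  intro j m hm
  by_cases hji : j = i
  · subst hji
    have hm0 : m = 0 := by
      by_contra h
      simp [e_apply_self, Polynomial.coeff_one, h] at hm
    simp [hm0]
  · simp [e_apply_of_ne hji] at hm

lemma IsHomog.map {gr₁ : Fin m → ℤ} {gr₂ : Fin n → ℤ} {dg c : ℤ} {p : V m →ₗ[R] V n}
    (hp : GradedMap gr₁ gr₂ dg p) {x : V m} (hx : IsHomog gr₁ c x) :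
    IsHomog gr₂ (c + dg) (p x) := by
  intro j k hk
  rw [map_eq_sum_smul p x] at hk
  simp only [Finset.sum_apply, Pi.smul_apply, smul_eq_mul, Polynomial.finsetSum_coeff] at hk
  obtain ⟨i, -, hi⟩ := Finset.exists_ne_zero_of_sum_ne_zero hk
  rw [Polynomial.coeff_mul] at hi
  obtain ⟨⟨a, b⟩, hab, hne⟩ := Finset.exists_ne_zero_of_sum_ne_zero hi
  rw [Finset.HasAntidiagonal.mem_antidiagonal] at hab
  have ha := hx i a (left_ne_zero_of_mul hne)
  have hb := hp i j b (right_ne_zero_of_mul hne)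
  omega

lemma GradedMap.comp {k : ℕ} {gr₁ : Fin m → ℤ} {gr₂ : Fin n → ℤ} {gr₃ : Fin k → ℤ}
    {a b c : ℤ} {f : V m →ₗ[R] V n} {p : V n →ₗ[R] V k}
    (hp : GradedMap gr₂ gr₃ b p) (hf : GradedMap gr₁ gr₂ a f) (h : a + b = c) :
    GradedMap gr₁ gr₃ c (p ∘ₗ f) := fun i => by
  simpa [← h, add_assoc] using (hf i).map hp

lemma GradedMap.add {gr₁ : Fin m → ℤ} {gr₂ : Fin n → ℤ} {a : ℤ} {f g : V m →ₗ[R] V n}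
    (hf : GradedMap gr₁ gr₂ a f) (hg : GradedMap gr₁ gr₂ a g) : GradedMap gr₁ gr₂ a (f + g) :=
  fun i => (hf i).add (hg i)

lemma gradedMap_id (gr : Fin n → ℤ) : GradedMap gr gr 0 LinearMap.id := fun i => by
  simpa using isHomog_e gr i

lemma gradedMap_zero (gr₁ : Fin m → ℤ) (gr₂ : Fin n → ℤ) (a : ℤ) :
    GradedMap gr₁ gr₂ a 0 := fun _ => IsHomog.zero gr₂ _

lemma gradedMap_funLeft (gr : Fin n → ℤ) (σ : Fin m → Fin n) :
    GradedMap gr (gr ∘ σ) 0 (LinearMap.funLeft R R σ) := by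
  intro i k c hc
  by_cases hk : σ k = i
  · simpa [hk] using isHomog_e gr i i c (by simpa [hk] using hc)
  · simp [e_apply_of_ne hk] at hc

lemma gradedMap_linearCombination_e (gr : Fin n → ℤ) (σ : Fin m → Fin n) :
    GradedMap (gr ∘ σ) gr 0 (Fintype.linearCombination R fun k => e (σ k)) := fun k => by
  simpa [Fintype.linearCombination_apply, e] using isHomog_e gr (σ k)

end Graded

lemma isLocalMap_id (C : PreAI) : isLocalMap C C LinearMap.id := by
  refine ⟨⟨gradedMap_id _, rfl, 0, gradedMap_zero _ _ _, fun x => ?_⟩, fun x hx => hx⟩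
  simpa [V.add_self] using modU_zero

lemma isLocalMap.comp {C₁ C₂ C₃ : PreAI} {f₁ : V C₁.n →ₗ[R] V C₂.n}
    {f₂ : V C₂.n →ₗ[R] V C₃.n} (h₂ : isLocalMap C₂ C₃ f₂) (h₁ : isLocalMap C₁ C₂ f₁) :
    isLocalMap C₁ C₃ (f₂ ∘ₗ f₁) := by
  obtain ⟨⟨hf₁, hd₁, H₁, hH₁, hι₁⟩, hnt₁⟩ := h₁
  obtain ⟨⟨hf₂, hd₂, H₂, hH₂, hι₂⟩, hnt₂⟩ := h₂
  refine ⟨⟨hf₂.comp hf₁ (by norm_num), ?_, H₂ ∘ₗ f₁ + f₂ ∘ₗ H₁,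
    (hH₂.comp hf₁ (by norm_num)).add (hf₂.comp hH₁ (by norm_num)), fun x => ?_⟩,
    fun x hx => hnt₂ _ (hnt₁ x hx)⟩
  · rw [LinearMap.comp_assoc, hd₁, ← LinearMap.comp_assoc, hd₂, LinearMap.comp_assoc]
  · convert ((hι₁ x).map f₂).add (hι₂ (f₁ x)) using 1
    have hd₁x : f₁ (C₁.d x) = C₂.d (f₁ x) := LinearMap.congr_fun hd₁ x
    have hd₂x : f₂ (C₂.d (H₁ x)) = C₃.d (f₂ (H₁ x)) := LinearMap.congr_fun hd₂ (H₁ x)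
    simp only [LinearMap.add_apply, LinearMap.comp_apply, map_add, hd₁x, hd₂x]
    linear_combination -f₂ (C₂.ι (f₁ x)) * V.two_eq_zero

lemma LocallyEquiv.refl (C : PreAI) : LocallyEquiv C C :=
  ⟨⟨_, isLocalMap_id C⟩, ⟨_, isLocalMap_id C⟩⟩

lemma LocallyEquiv.trans {C₁ C₂ C₃ : PreAI} (h₁ : LocallyEquiv C₁ C₂)
    (h₂ : LocallyEquiv C₂ C₃) : LocallyEquiv C₁ C₃ := by
  obtain ⟨⟨f₁, hf₁⟩, g₁, hg₁⟩ := h₁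
  obtain ⟨⟨f₂, hf₂⟩, g₂, hg₂⟩ := h₂
  exact ⟨⟨_, hf₂.comp hf₁⟩, ⟨_, hg₁.comp hg₂⟩⟩

lemma IsCplx.d_d {C : PreCplx} (hC : IsCplx C) (v : V C.n) : C.d (C.d v) = 0 :=
  LinearMap.congr_fun hC.2 v

/-- The side conditions `H ∂ g = 0` and `f ∂ H ∂ = 0`, weaker than those of a strong deformation
retraction, are what make `f` and `g` chain maps. -/
structure IsDeformationRetract (C D : PreAI) (f : V C.n →ₗ[R] V D.n) (g : V D.n →ₗ[R] V C.n)
    (H : V C.n →ₗ[R] V C.n) : Prop where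
  graded_f : GradedMap C.gr D.gr 0 f
  graded_g : GradedMap D.gr C.gr 0 g
  graded_H : GradedMap C.gr C.gr 1 H
  f_g : ∀ w, f (g w) = w
  g_f : ∀ v, g (f v) = v + C.d (H v) + H (C.d v)
  H_d_g : ∀ w, H (C.d (g w)) = 0
  f_d_H_d : ∀ v, f (C.d (H (C.d v))) = 0
  d_apply : ∀ w, D.d w = f (C.d (g w))
  ι_apply : ∀ w, D.ι w = f (C.ι (g w))

namespace IsDeformationRetract

variable {C D : PreAI} {f : V C.n →ₗ[R] V D.n} {g : V D.n →ₗ[R] V C.n} {H : V C.n →ₗ[R] V C.n}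
  (hr : IsDeformationRetract C D f g H)
include hr

lemma d_eq : D.d = f ∘ₗ C.d ∘ₗ g := LinearMap.ext hr.d_apply

lemma ι_eq : D.ι = f ∘ₗ C.ι ∘ₗ g := LinearMap.ext hr.ι_apply

section

variable (hd2 : ∀ v, C.d (C.d v) = 0)
include hd2

lemma f_d (v : V C.n) : f (C.d v) = D.d (f v) := by
  simp [hr.d_apply, hr.g_f, hd2, hr.f_d_H_d]

lemma d_g (w : V D.n) : C.d (g w) = g (D.d w) := by
  simp [hr.d_apply, hr.g_f, hd2, hr.H_d_g]

lemma nontorsionClass_f {x : V C.n} (hx : NontorsionClass C.toPreCplx x) :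
    NontorsionClass D.toPreCplx (f x) := by
  obtain ⟨hcyc, hnb⟩ := hx
  have hcyc : C.d x = 0 := hcyc
  refine ⟨(hr.f_d hd2 x).symm.trans (by rw [hcyc, map_zero]), fun k ⟨z, hz⟩ => hnb k ?_⟩
  refine ⟨g z + Uu ^ k • H x, ?_⟩
  have hgz : C.d (g z) = Uu ^ k • x + Uu ^ k • C.d (H x) := by
    rw [hr.d_g hd2, hz, map_smul, hr.g_f, hcyc, map_zero, add_zero, smul_add]
  rw [map_add, map_smul, hgz]
  linear_combination Uu ^ k • C.d (H x) * V.two_eq_zero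

lemma nontorsionClass_g {y : V D.n} (hy : NontorsionClass D.toPreCplx y) :
    NontorsionClass C.toPreCplx (g y) := by
  obtain ⟨hcyc, hnb⟩ := hy
  have hcyc : D.d y = 0 := hcyc
  refine ⟨by rw [IsCycle, hr.d_g hd2, hcyc, map_zero], fun k ⟨z, hz⟩ => hnb k ⟨f z, ?_⟩⟩
  rw [← hr.f_d hd2, hz, map_smul, hr.f_g]

lemma htowerCond (ht : HtowerCond C.toPreCplx) : HtowerCond D.toPreCplx := by
  obtain ⟨x, hcyc, hhom, hnb, hgen⟩ := ht
  have hfx := hr.nontorsionClass_f hd2 ⟨hcyc, hnb⟩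
  refine ⟨f x, hfx.1, by simpa using hhom.map hr.graded_f, hfx.2, fun y hy => ?_⟩
  have hy : D.d y = 0 := hy
  obtain ⟨k, p, z, hz⟩ := hgen (g y) (by rw [IsCycle, hr.d_g hd2, hy, map_zero])
  exact ⟨k, p, f z, by simpa [hr.f_g, hr.f_d hd2] using congrArg f hz⟩

variable (hιd : ∀ v, modU (C.ι (C.d v) + C.d (C.ι v)))
include hιd

lemma modU_ι_d (w : V D.n) : modU (D.ι (D.d w) + D.d (D.ι w)) := by
  convert (hιd (g w)).map f using 1
  rw [hr.ι_apply, ← hr.d_g hd2, hr.ι_apply, ← hr.f_d hd2, map_add]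

variable (hι : GradedMap C.gr C.gr 0 C.ι)
include hι

lemma isLocalMap_f : isLocalMap C D f := by
  refine ⟨⟨hr.graded_f, LinearMap.ext (hr.f_d hd2), f ∘ₗ C.ι ∘ₗ H,
    hr.graded_f.comp (hι.comp hr.graded_H rfl) (by norm_num), fun x => ?_⟩,
    fun x => hr.nontorsionClass_f hd2⟩
  convert (hιd (H x)).map f using 1
  simp only [LinearMap.add_apply, LinearMap.comp_apply, hr.ι_apply, hr.g_f, ← hr.f_d hd2,
    map_add]
  linear_combination (f (C.ι x) + f (C.ι (H (C.d x)))) * V.two_eq_zero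

lemma isLocalMap_g : isLocalMap D C g := by
  refine ⟨⟨hr.graded_g, LinearMap.ext fun w => (hr.d_g hd2 w).symm, H ∘ₗ C.ι ∘ₗ g,
    hr.graded_H.comp (hι.comp hr.graded_g rfl) (by norm_num), fun x => ?_⟩,
    fun y => hr.nontorsionClass_g hd2⟩
  convert (hιd (g x)).map H using 1
  simp only [LinearMap.add_apply, LinearMap.comp_apply, hr.ι_apply, hr.g_f, ← hr.d_g hd2,
    map_add]
  linear_combination (C.ι (g x) + C.d (H (C.ι (g x)))) * V.two_eq_zero

lemma homotopicModU_ι_sq (hG : HomotopicModU C.toPreCplx C.toPreCplx (C.ι ∘ₗ C.ι) LinearMap.id) :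
    HomotopicModU D.toPreCplx D.toPreCplx (D.ι ∘ₗ D.ι) LinearMap.id := by
  obtain ⟨G, hGgr, hG⟩ := hG
  refine ⟨f ∘ₗ (G + C.ι ∘ₗ H ∘ₗ C.ι) ∘ₗ g,
    hr.graded_f.comp ((hGgr.add (hι.comp (hr.graded_H.comp hι rfl) rfl)).comp hr.graded_g rfl)
      (by norm_num), fun x => ?_⟩
  convert (((hG (g x)).map f).add ((hιd (H (C.ι (g x)))).map f)).add
    ((hιd (g x)).map (f ∘ₗ C.ι ∘ₗ H)) using 1
  simp only [LinearMap.add_apply, LinearMap.comp_apply, LinearMap.id_apply, hr.ι_apply,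
    hr.g_f, ← hr.d_g hd2, ← hr.f_d hd2, hr.f_g, map_add]
  ring

end

lemma isCplx (hC : IsCplx C.toPreCplx) : IsCplx D.toPreCplx := by
  refine ⟨?_, LinearMap.ext fun w => ?_⟩
  · rw [hr.d_eq]
    exact hr.graded_f.comp (hC.1.comp hr.graded_g rfl) (by norm_num)
  · rw [LinearMap.comp_apply, hr.d_apply (D.d w), ← hr.d_g hC.d_d, hC.d_d, map_zero,
      LinearMap.zero_apply]

lemma isAICplx (hC : IsAICplx C) : IsAICplx D := by
  obtain ⟨hCplx, hι, hιd, hG, ht⟩ := hC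
  refine ⟨hr.isCplx hCplx, ?_, hr.modU_ι_d hCplx.d_d hιd,
    hr.homotopicModU_ι_sq hCplx.d_d hιd hι hG, hr.htowerCond hCplx.d_d ht⟩
  rw [hr.ι_eq]
  exact hr.graded_f.comp (hι.comp hr.graded_g rfl) (by norm_num)

lemma locallyEquiv (hC : IsAICplx C) : LocallyEquiv C D :=
  ⟨⟨f, hr.isLocalMap_f hC.1.d_d hC.2.2.1 hC.2.1⟩, ⟨g, hr.isLocalMap_g hC.1.d_d hC.2.2.1 hC.2.1⟩⟩

end IsDeformationRetract

namespace Cancel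

section Reindex

variable {n : ℕ} (i j : Fin n)

def rest : Finset (Fin n) := {i, j}ᶜ

def emb (k : Fin (rest i j).card) : Fin n := (rest i j).equivFin.symm k

def restrict : V n →ₗ[R] V (rest i j).card := LinearMap.funLeft R R (emb i j)

def extend : V (rest i j).card →ₗ[R] V n := Fintype.linearCombination R fun k => e (emb i j k)

def htpy : V n →ₗ[R] V n := LinearMap.smulRight (LinearMap.proj j) (e i)

variable {i j}

lemma card_rest_lt : (rest i j).card < n := by
  have h := (Finset.card_compl_lt_iff_nonempty ({i, j} : Finset (Fin n))).2 ⟨i, by simp⟩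
  rwa [Fintype.card_fin] at h

lemma emb_ne_left (k : Fin (rest i j).card) : emb i j k ≠ i := by
  have := ((rest i j).equivFin.symm k).2
  simp_all [rest, emb]

lemma emb_ne_right (k : Fin (rest i j).card) : emb i j k ≠ j := by
  have := ((rest i j).equivFin.symm k).2
  simp_all [rest, emb]

lemma emb_injective : Function.Injective (emb i j) :=
  Subtype.val_injective.comp (rest i j).equivFin.symm.injective

lemma exists_emb_eq {l : Fin n} (hi : l ≠ i) (hj : l ≠ j) : ∃ k, emb i j k = l :=
  ⟨(rest i j).equivFin ⟨l, by simp [rest, hi, hj]⟩, by simp [emb]⟩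

lemma htpy_apply (v : V n) : htpy i j v = v j • e i := rfl

lemma extend_apply_emb (w : V (rest i j).card) (k : Fin (rest i j).card) :
    extend i j w (emb i j k) = w k := by
  simp [extend, Fintype.linearCombination_apply, Finset.sum_apply, e, emb_injective.eq_iff]

lemma extend_apply_of_ne {l : Fin n} (hl : ∀ k, emb i j k ≠ l) (w : V (rest i j).card) :
    extend i j w l = 0 := by
  simp [extend, Fintype.linearCombination_apply, Finset.sum_apply, e_apply_of_ne (hl _).symm]

lemma restrict_extend (w : V (rest i j).card) : restrict i j (extend i j w) = w :=
  funext fun k => extend_apply_emb w k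

lemma extend_restrict (hij : i ≠ j) (v : V n) :
    extend i j (restrict i j v) = v + v i • e i + v j • e j := by
  funext l
  by_cases hi : l = i
  · subst hi
    simp [extend_apply_of_ne emb_ne_left, e_apply_self, e_apply_of_ne hij,
      CharTwo.add_self_eq_zero]
  by_cases hj : l = j
  · subst hj
    simp [extend_apply_of_ne emb_ne_right, e_apply_self, e_apply_of_ne hi,
      CharTwo.add_self_eq_zero]
  obtain ⟨k, rfl⟩ := exists_emb_eq hi hj
  simp [extend_apply_emb, restrict, e_apply_of_ne hi, e_apply_of_ne hj]

lemma restrict_e_left : restrict i j (e i) = 0 := funext fun k => e_apply_of_ne (emb_ne_left k)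

lemma restrict_htpy (v : V n) : restrict i j (htpy i j v) = 0 := by
  rw [htpy_apply, map_smul, restrict_e_left, smul_zero]

lemma htpy_extend (w : V (rest i j).card) : htpy i j (extend i j w) = 0 := by
  rw [htpy_apply, extend_apply_of_ne emb_ne_right, zero_smul]

lemma htpy_htpy (hij : i ≠ j) (v : V n) : htpy i j (htpy i j v) = 0 := by
  simp [htpy_apply, e_apply_of_ne hij.symm]

lemma gradedMap_htpy {gr : Fin n → ℤ} (hgr : gr j + 1 = gr i) : GradedMap gr gr 1 (htpy i j) := by
  intro l
  rw [htpy_apply]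
  by_cases hl : l = j
  · subst hl
    simpa [e_apply_self, hgr] using isHomog_e gr i
  · simpa [e_apply_of_ne (Ne.symm hl)] using IsHomog.zero gr (gr l + 1)

end Reindex

variable (C : PreAI) (i j : Fin C.n)

def proj : V C.n →ₗ[R] V (rest i j).card := restrict i j ∘ₗ (LinearMap.id + C.d ∘ₗ htpy i j)

def incl : V (rest i j).card →ₗ[R] V C.n := (LinearMap.id + htpy i j ∘ₗ C.d) ∘ₗ extend i j

def complex : PreAI :=
  ⟨⟨(rest i j).card, C.gr ∘ emb i j, proj C i j ∘ₗ C.d ∘ₗ incl C i j⟩,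
    proj C i j ∘ₗ C.ι ∘ₗ incl C i j⟩

variable {C i j}

lemma htpy_d_e_left (hu : C.d (e i) j = 1) : htpy i j (C.d (e i)) = e i := by
  simp [htpy_apply, hu]

lemma htpy_d_htpy (hu : C.d (e i) j = 1) (v : V C.n) :
    htpy i j (C.d (htpy i j v)) = htpy i j v := by
  rw [htpy_apply v, map_smul, map_smul, htpy_d_e_left hu]

lemma proj_incl (hij : i ≠ j) (w : V (rest i j).card) : proj C i j (incl C i j w) = w := by
  simp [proj, incl, htpy_extend, htpy_htpy hij, restrict_htpy, restrict_extend]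

lemma incl_proj (hij : i ≠ j) (hu : C.d (e i) j = 1) (hd2 : ∀ v, C.d (C.d v) = 0)
    (v : V C.n) : incl C i j (proj C i j v) = v + C.d (htpy i j v) + htpy i j (C.d v) := by
  set w := v + C.d (htpy i j v)
  have hwj : w j = 0 := by
    simp [w, htpy_apply, hu, CharTwo.add_self_eq_zero]
  have hHdw : htpy i j (C.d w) = htpy i j (C.d v) := by
    simp [w, hd2]
  calc incl C i j (proj C i j v)
      = extend i j (restrict i j w) + htpy i j (C.d (extend i j (restrict i j w))) := rfl
    _ = w + w i • e i + (htpy i j (C.d v) + w i • e i) := by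
      rw [extend_restrict hij, hwj, zero_smul, add_zero, map_add, map_add, hHdw, map_smul,
        map_smul, htpy_d_e_left hu]
    _ = w + htpy i j (C.d v) := by linear_combination (w i • e i) * V.two_eq_zero

lemma htpy_d_incl (hu : C.d (e i) j = 1) (w : V (rest i j).card) :
    htpy i j (C.d (incl C i j w)) = 0 := by
  simp only [incl, LinearMap.comp_apply, LinearMap.add_apply, LinearMap.id_apply, map_add,
    htpy_d_htpy hu]
  linear_combination htpy i j (C.d (extend i j w)) * V.two_eq_zero

lemma proj_d_htpy (hu : C.d (e i) j = 1) (v : V C.n) : proj C i j (C.d (htpy i j v)) = 0 := by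
  simp only [proj, LinearMap.comp_apply, LinearMap.add_apply, LinearMap.id_apply,
    htpy_d_htpy hu, ← map_add, V.add_self, map_zero]

lemma gr_add_one_of_unit (hdg : GradedMap C.gr C.gr (-1) C.d) (hu : C.d (e i) j = 1) :
    C.gr j + 1 = C.gr i := by
  have := hdg i j 0 (by simp [hu])
  omega

lemma isDeformationRetract (hdg : GradedMap C.gr C.gr (-1) C.d) (hd2 : ∀ v, C.d (C.d v) = 0)
    (hu : C.d (e i) j = 1) :
    IsDeformationRetract C (complex C i j) (proj C i j) (incl C i j) (htpy i j) := by
  have hgr := gr_add_one_of_unit hdg hu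
  have hij : i ≠ j := by rintro rfl; omega
  have hH := gradedMap_htpy hgr
  exact
  { graded_f := (gradedMap_funLeft C.gr (emb i j)).comp
      ((gradedMap_id C.gr).add (hdg.comp hH (by norm_num))) (by norm_num)
    graded_g := ((gradedMap_id C.gr).add (hH.comp hdg (by norm_num))).comp
      (gradedMap_linearCombination_e C.gr (emb i j)) (by norm_num)
    graded_H := hH
    f_g := proj_incl hij
    g_f := incl_proj hij hu hd2
    H_d_g := htpy_d_incl hu
    f_d_H_d := fun v => proj_d_htpy hu (C.d v)
    d_apply := fun _ => rfl
    ι_apply := fun _ => rfl }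

end Cancel

lemma eq_one_of_coeff_zero_ne_zero {p : R} (hconst : ∀ m, p.coeff m ≠ 0 → m = 0)
    (h0 : p.coeff 0 ≠ 0) : p = 1 := by
  ext m
  rcases eq_or_ne m 0 with rfl | hm
  · have hF2 : ∀ a : F2, a ≠ 0 → a = 1 := by decide
    simpa using hF2 _ h0
  · rw [Polynomial.coeff_one, if_neg hm]
    by_contra hne
    exact hm (hconst m hne)

lemma exists_unit_entry {C : PreCplx} (hdg : GradedMap C.gr C.gr (-1) C.d)
    (hnr : ¬ ∀ x, modU (C.d x)) : ∃ i j, C.d (e i) j = 1 := by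
  simp only [modU, not_forall] at hnr
  obtain ⟨x, j, hx⟩ := hnr
  simp only [map_eq_sum_smul C.d x, Finset.sum_apply, Pi.smul_apply, smul_eq_mul,
    Polynomial.finsetSum_coeff, Polynomial.mul_coeff_zero] at hx
  obtain ⟨i, -, hi⟩ := Finset.exists_ne_zero_of_sum_ne_zero hx
  have h0 := right_ne_zero_of_mul hi
  refine ⟨i, j, eq_one_of_coeff_zero_ne_zero (fun m hm => ?_) h0⟩
  have h1 := hdg i j m hm
  have h2 := hdg i j 0 h0
  omega

lemma exists_locallyEquiv_of_not_reduced {C : PreAI} (hC : IsAICplx C) (hnr : ¬ Reduced C) :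
    ∃ D : PreAI, D.n < C.n ∧ IsAICplx D ∧ LocallyEquiv C D := by
  obtain ⟨i, j, hu⟩ := exists_unit_entry hC.1.1 hnr
  have hr := Cancel.isDeformationRetract hC.1.1 hC.1.d_d hu
  exact ⟨_, Cancel.card_rest_lt, hr.isAICplx hC, hr.locallyEquiv hC⟩

/-- every almost ι-complex is locally equivalent to a reduced one. -/
theorem locallyEquiv_reduced (C : PreAI) (h : IsAICplx C) :
    ∃ C' : PreAI, IsAICplx C' ∧ Reduced C' ∧ LocallyEquiv C C' := by
  induction hn : C.n using Nat.strong_induction_on generalizing C with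
  | _ n ih =>
  by_cases hred : Reduced C
  · exact ⟨C, h, hred, .refl C⟩
  obtain ⟨D, hlt, hD, hCD⟩ := exists_locallyEquiv_of_not_reduced h hred
  obtain ⟨C', hC', hred', hDC'⟩ := ih D.n (hn ▸ hlt) D hD rfl
  exact ⟨C', hC', hred', hCD.trans hDC'⟩

end AI
end
end

section
/- If C is a reduced almost ι-complex (im ∂ ⊆ im U), then ω² ≡ 0 mod U where ω = 1 + ῑ; moreover a chain map f between reduced almost ι-complexes is an almost ι-morphism if and only if fω + ωf ≡ 0 mod U (no homotopy needed). -/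
open Polynomial

noncomputable section

namespace AI

/-- Any linear map preserves `modU`. -/
lemma modU_map {m n : ℕ} (H : V m →ₗ[R] V n) {v : V m} (hv : modU v) : modU (H v) := by
  have hrep : v = ∑ i, v i • e i := by
    funext j
    simp [e, mul_ite, Finset.sum_ite_eq]
  intro j
  rw [hrep, map_sum]
  simp only [map_smul, Finset.sum_apply, Pi.smul_apply, smul_eq_mul]
  rw [Polynomial.finset_sum_coeff]
  exact Finset.sum_eq_zero fun i _ => by
    rw [Polynomial.mul_coeff_zero, hv i, zero_mul]

lemma zmod2_add_self (a : F2) : a + a = 0 := by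
  have : (2 : F2) = 0 := by decide
  calc a + a = 2 * a := by ring
  _ = 0 := by rw [this, zero_mul]

/-- if `C` is reduced then `ω² ≡ 0 mod U`; and a chain map `f`
between reduced almost ι-complexes is an almost ι-morphism iff
`fω + ωf ≡ 0 mod U` (no homotopy needed). -/
theorem reduced_omega_sq_and_morphism_criterion (C : PreAI)
    (hC : IsAICplx C) (hred : Reduced C) :
    (∀ x, modU ((omega C ∘ₗ omega C) x)) ∧
    (∀ C' : PreAI, IsAICplx C' → Reduced C' →
      ∀ f : V C.n →ₗ[R] V C'.n, GradedMap C.gr C'.gr 0 f →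
        f ∘ₗ C.d = C'.d ∘ₗ f →
        (HomotopicModU C.toPreCplx C'.toPreCplx (f ∘ₗ C.ι) (C'.ι ∘ₗ f) ↔
          ∀ x, modU ((f ∘ₗ omega C + omega C' ∘ₗ f) x))) := by
  obtain ⟨hcx, hgι, hcomm, ⟨H, hHg, hH⟩, htw⟩ := hC
  constructor
  · intro x j
    have h1 := hH x j
    have h2 := modU_map H (hred x) j
    have h3 := hred (H x) j
    have h4 := zmod2_add_self ((C.ι x j).coeff 0)
    simp only [omega, LinearMap.comp_apply, LinearMap.add_apply, LinearMap.id_apply,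
      map_add, Pi.add_apply, Polynomial.coeff_add] at h1 h2 h3 ⊢
    linear_combination h1 - h2 - h3 + h4
  · intro C' hC' hred' f hgf hcf
    constructor
    · rintro ⟨K, hKg, hK⟩ x j
      have h1 := hK x j
      have h2 := modU_map K (hred x) j
      have h3 := hred' (K x) j
      have h4 := zmod2_add_self ((f x j).coeff 0)
      simp only [omega, LinearMap.comp_apply, LinearMap.add_apply, LinearMap.id_apply,
        map_add, Pi.add_apply, Polynomial.coeff_add] at h1 h2 h3 ⊢
      linear_combination h1 - h2 - h3 + h4
    · intro h
      refine ⟨0, ?_, ?_⟩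
      · intro i j m hm
        simp only [LinearMap.zero_apply, Pi.zero_apply, Polynomial.coeff_zero,
          ne_eq, not_true_eq_false] at hm
      · intro x j
        have h1 := h x j
        have h4 := zmod2_add_self ((f x j).coeff 0)
        simp only [omega, LinearMap.comp_apply, LinearMap.add_apply, LinearMap.id_apply,
          LinearMap.comp_zero, LinearMap.zero_comp, LinearMap.zero_apply,
          Pi.zero_apply, Polynomial.coeff_zero,
          map_add, Pi.add_apply, Polynomial.coeff_add] at h1 ⊢
        linear_combination h1 - h4

end AI
end
end
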